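/- Let V be the group with underlying set F⁵, where [r₁,…,r₅] denotes x_α(r₁)x_{α+β}(r₂)x_{2α+β}(r₃)x_{3α+β}(r₄)x_{3α+2β}(r₅) and multiplication is determined by the G2 Chevalley commutator relations. Then the map pr: V → H(F) given by pr([r₁,r₂,r₃,r₄,r₅]) = (r₁, r₂, r₃ − r₁r₂) is a surjective group homomorphism whose kernel is the subgroup V₁ = {[0,0,0,r₄,r₅] : r₄, r₅ ∈ F}. -/
import Mathlib


/-- The Heisenberg multiplication on `F³`. -/
def heisMul {F : Type*} [CommRing F] (a b : F × F × F) : F × F × F :=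
  (a.1 + b.1, a.2.1 + b.2.1, a.2.2 + b.2.2 - a.1 * b.2.1 + a.2.1 * b.1)

/-- The multiplication on `V = F⁵` (coordinates of
`x_α(r₁)x_{α+β}(r₂)x_{2α+β}(r₃)x_{3α+β}(r₄)x_{3α+2β}(r₅)`) determined by the G2
Chevalley commutator relations
`[x_α(x), x_{α+β}(y)] = x_{2α+β}(−2xy)x_{3α+β}(3x²y)x_{3α+2β}(3xy²)`,
`[x_α(x), x_{2α+β}(y)] = x_{3α+β}(3xy)`,
`[x_{α+β}(x), x_{2α+β}(y)] = x_{3α+2β}(3xy)`, all other pairs commuting. -/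
def VMul {F : Type*} [CommRing F] (u v : F × F × F × F × F) : F × F × F × F × F :=
  (u.1 + v.1,
   u.2.1 + v.2.1,
   u.2.2.1 + v.2.2.1 + 2 * v.1 * u.2.1,
   u.2.2.2.1 + v.2.2.2.1 - 3 * v.1 ^ 2 * u.2.1 - 3 * v.1 * u.2.2.1,
   u.2.2.2.2 + v.2.2.2.2 - 3 * v.1 * u.2.1 ^ 2 - 6 * v.1 * u.2.1 * v.2.1
     - 3 * v.2.1 * u.2.2.1)

/-- The projection `pr : V → H(F)`, `[r₁,r₂,r₃,r₄,r₅] ↦ (r₁, r₂, r₃ − r₁r₂)`. -/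
def Vpr {F : Type*} [CommRing F] (u : F × F × F × F × F) : F × F × F :=
  (u.1, u.2.1, u.2.2.1 - u.1 * u.2.1)

/-- `pr` is a surjective group homomorphism from `V` onto the Heisenberg group,
whose kernel is `V₁ = {[0,0,0,r₄,r₅]}`. -/
theorem stmt9 {F : Type*} [Field F] (h2 : (2 : F) ≠ 0) (h3 : (3 : F) ≠ 0) :
    (∀ u v : F × F × F × F × F, Vpr (VMul u v) = heisMul (Vpr u) (Vpr v)) ∧
    Function.Surjective (Vpr (F := F)) ∧
    (∀ u : F × F × F × F × F,
      Vpr u = ((0 : F), (0 : F), (0 : F)) ↔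
        u.1 = 0 ∧ u.2.1 = 0 ∧ u.2.2.1 = 0) := by
  refine ⟨?_, ?_, ?_⟩
  · intro u v
    simp only [Vpr, VMul, heisMul, Prod.mk.injEq]
    exact ⟨trivial, trivial, by ring⟩
  · intro ⟨a, b, c⟩
    exact ⟨(a, b, c + a * b, 0, 0), by simp [Vpr]⟩
  · intro u
    constructor
    · intro h
      simp only [Vpr, Prod.mk.injEq] at h
      obtain ⟨h1, h2, h3⟩ := h
      refine ⟨h1, h2, ?_⟩
      rw [h1] at h3; simpa using h3
    · rintro ⟨h1, h2, h3⟩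
      simp [Vpr, h1, h2, h3]
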